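/- arXiv:1301.7292 — 6 statements merged into one kernel-verified Lean document; each statement's English description precedes it below -/
import Mathlib

section
/- The set of tuples (φ_1, ..., φ_{d^2}) of vectors in ℂ^d for which the outer products φ_1φ_1*, ..., φ_{d^2}φ_{d^2}* span the real vector space of d×d Hermitian matrices is open and dense in (ℂ^d)^{d^2}. -/
/-!
The outer products are Hermitian, and the Hermitian matrices form a real space of dimension `d²`
(every complex matrix is uniquely `X + i Y` with `X`, `Y` Hermitian). So the outer products of a
`d²`-tuple `φ` span that space exactly when their determinant `D φ` in a fixed basis is nonzero.
`D` is continuous, which gives openness. Along a line `φ + t • v` every outer product is quadratic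
in `t`, so `D` restricts to a polynomial in `t`. By the spectral theorem the outer products span
all Hermitian matrices, so some tuple `ψ` has `D ψ ≠ 0`; on the line through any `φ` and `ψ` the
polynomial is then nonzero, has finitely many roots, and `φ` is a limit of tuples with `D ≠ 0`.
-/

/-- The outer product `x x*` of a vector `x ∈ ℂ^d` with itself:
the `d × d` matrix whose `(j,k)` entry is `x j * conj (x k)`. -/
def outer {d : ℕ} (x : EuclideanSpace ℂ (Fin d)) : Matrix (Fin d) (Fin d) ℂ :=
  Matrix.of fun j k => x j * starRingEnd ℂ (x k)

open Polynomial Module Submodule Set ComplexStarModule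

section SelfAdjoint

variable {A : Type*} [AddCommGroup A] [Module ℂ A] [StarAddMonoid A] [StarModule ℂ A]

noncomputable def realImaginaryPartEquiv : A ≃ₗ[ℝ] selfAdjoint A × selfAdjoint A :=
  LinearEquiv.ofBijective (realPart.prod imaginaryPart)
    ⟨fun _ _ h => ComplexStarModule.ext (congrArg Prod.fst h) (congrArg Prod.snd h),
      fun p => ⟨(p.1 : A) + Complex.I • (p.2 : A), by ext <;> simp⟩⟩

lemma two_mul_finrank_selfAdjoint [FiniteDimensional ℝ A] :
    2 * finrank ℝ (selfAdjoint.submodule ℝ A) = finrank ℝ A := by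
  have : FiniteDimensional ℝ (selfAdjoint A) :=
    inferInstanceAs (FiniteDimensional ℝ (selfAdjoint.submodule ℝ A))
  rw [realImaginaryPartEquiv.finrank_eq, finrank_prod, two_mul]
  rfl

end SelfAdjoint

lemma finrank_selfAdjoint_matrix (n : Type*) [Fintype n] :
    finrank ℝ (selfAdjoint.submodule ℝ (Matrix n n ℂ)) = Fintype.card n ^ 2 := by
  have h := two_mul_finrank_selfAdjoint (A := Matrix n n ℂ)
  rw [finrank_matrix, Complex.finrank_real_complex] at h
  rw [sq]
  omega

namespace Module.Basis

variable {ι : Type*} [Fintype ι] [DecidableEq ι]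

lemma span_range_eq_top_iff_det_ne_zero {K V : Type*} [Field K] [AddCommGroup V] [Module K V]
    (b : Basis ι K V) (v : ι → V) : span K (range v) = ⊤ ↔ b.det v ≠ 0 := by
  rw [← isUnit_iff_ne_zero, ← b.is_basis_iff_det, iff_and_self]
  exact fun h => linearIndependent_of_top_le_span_of_card_eq_finrank h.ge
    (finrank_eq_card_basis b).symm

lemma exists_polynomial_det_eq {R M : Type*} [CommRing R] [AddCommGroup M] [Module R M]
    (b : Basis ι R M) (v : R → ι → M)
    (hv : ∀ i j, ∃ p : R[X], ∀ t, b.repr (v t j) i = p.eval t) :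
    ∃ p : R[X], ∀ t, b.det (v t) = p.eval t := by
  choose p hp using hv
  refine ⟨(Matrix.of p).det, fun t => ?_⟩
  rw [b.det_apply, ← coe_evalRingHom, RingHom.map_det]
  congr 1
  ext i j
  simp [toMatrix_apply, hp]

lemma continuous_det {𝕜 E : Type*} [NontriviallyNormedField 𝕜] [CompleteSpace 𝕜]
    [AddCommGroup E] [Module 𝕜 E] [TopologicalSpace E] [IsTopologicalAddGroup E]
    [ContinuousSMul 𝕜 E] [T2Space E] [FiniteDimensional 𝕜 E] (b : Basis ι 𝕜 E) :
    Continuous b.det := by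
  have h : Continuous b.equivFun := LinearMap.continuous_of_finiteDimensional _
  simp_rw [funext b.det_apply]
  exact Continuous.matrix_det <| continuous_pi fun i => continuous_pi fun j =>
    (continuous_apply i).comp (h.comp (continuous_apply j))

end Module.Basis

lemma exists_fin_finrank_span_range_eq_top {K V κ : Type*} [DivisionRing K] [AddCommGroup V]
    [Module K V] [FiniteDimensional K V] {f : κ → V} (hf : span K (range f) = ⊤) :
    ∃ g : Fin (finrank K V) → κ, span K (range (f ∘ g)) = ⊤ := by
  let B := Basis.ofSpan hf.ge
  let e := B.indexEquiv (finBasis K V)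
  have hB : ∀ i, ∃ k, f k = B (e.symm i) := fun i => Basis.ofSpan_subset hf.ge ⟨_, rfl⟩
  choose g hg using hB
  refine ⟨g, ?_⟩
  rw [show f ∘ g = B ∘ e.symm from funext hg, range_comp, e.symm.surjective.range_eq, image_univ,
    B.span_eq]

lemma dense_setOf_ne_zero_of_polynomial_on_lines {E : Type*} [AddCommGroup E] [Module ℝ E]
    [TopologicalSpace E] [ContinuousAdd E] [ContinuousSMul ℝ E] {f : E → ℝ}
    (hf : ∀ x v : E, ∃ p : ℝ[X], ∀ t : ℝ, f (x + t • v) = p.eval t) {y : E} (hy : f y ≠ 0) :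
    Dense {x | f x ≠ 0} := by
  intro x
  obtain ⟨p, hp⟩ := hf x (y - x)
  have hp0 : p ≠ 0 := by
    rintro rfl
    exact hy (by simpa using hp 1)
  have hroots : Dense {t : ℝ | p.eval t ≠ 0} :=
    (p.finite_setOfPred_isRoot hp0).countable.dense_compl ℝ
  have hline : Continuous fun t : ℝ => x + t • (y - x) := by fun_prop
  have hx := mem_closure_image hline.continuousAt (hroots 0)
  rw [zero_smul, add_zero] at hx
  refine closure_mono ?_ hx
  rintro _ ⟨t, ht, rfl⟩
  simpa [hp] using ht

section Outer

variable {d : ℕ}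

lemma outer_mem_selfAdjoint (x : EuclideanSpace ℂ (Fin d)) :
    outer x ∈ selfAdjoint.submodule ℝ (Matrix (Fin d) (Fin d) ℂ) := by
  ext j k
  simp [outer, Matrix.star_apply, mul_comm]

lemma continuous_outer : Continuous (outer (d := d)) := by
  unfold outer
  fun_prop

/-- The middle coefficient is `x v* + v x*`, written by polarization as a combination of outer
products so that the identity lifts to `selfAdjointOuter`. -/
lemma outer_add_smul (x v : EuclideanSpace ℂ (Fin d)) (t : ℝ) :
    outer (x + t • v) = outer x + t • (outer (x + v) - outer x - outer v) + t ^ 2 • outer v := by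
  ext j k
  simp only [outer, PiLp.add_apply, PiLp.smul_apply, Complex.real_smul, map_add, map_mul,
    Complex.conj_ofReal, Matrix.of_apply, Matrix.of_sub_of, Matrix.smul_of, Matrix.of_add_of,
    Matrix.add_apply, Pi.add_apply, Pi.smul_apply, Pi.sub_apply, Complex.ofReal_pow]
  ring

lemma Matrix.IsHermitian.sum_eigenvalues_smul_outer {A : Matrix (Fin d) (Fin d) ℂ}
    (hA : A.IsHermitian) : ∑ i, hA.eigenvalues i • outer (hA.eigenvectorBasis i) = A := by
  conv_rhs => rw [hA.spectral_theorem, Unitary.conjStarAlgAut_apply]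
  ext j k
  simp only [outer, smul_of, sum_apply, of_apply, Pi.smul_apply, Complex.real_smul,
    Complex.coe_algebraMap, mul_apply, eigenvectorUnitary_apply, diagonal_apply, Function.comp_apply,
    mul_ite, mul_zero, Finset.sum_ite_eq', Finset.mem_univ, ↓reduceIte, star_apply, RCLike.star_def]
  exact Finset.sum_congr rfl fun i _ => by ring

lemma span_range_outer :
    span ℝ (range (outer (d := d))) = selfAdjoint.submodule ℝ (Matrix (Fin d) (Fin d) ℂ) := by
  refine le_antisymm (span_le.mpr (range_subset_iff.mpr outer_mem_selfAdjoint)) fun A hA => ?_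
  rw [← (show A.IsHermitian from hA).sum_eigenvalues_smul_outer]
  exact sum_mem fun i _ => smul_mem _ _ (subset_span (mem_range_self _))

def selfAdjointOuter (x : EuclideanSpace ℂ (Fin d)) :
    selfAdjoint.submodule ℝ (Matrix (Fin d) (Fin d) ℂ) :=
  ⟨outer x, outer_mem_selfAdjoint x⟩

lemma continuous_selfAdjointOuter : Continuous (selfAdjointOuter (d := d)) :=
  continuous_outer.subtype_mk _

lemma span_range_outer_eq_iff {ι : Type*} (φ : ι → EuclideanSpace ℂ (Fin d)) :
    span ℝ (range fun i => outer (φ i)) = selfAdjoint.submodule ℝ (Matrix (Fin d) (Fin d) ℂ) ↔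
      span ℝ (range (selfAdjointOuter ∘ φ)) = ⊤ := by
  rw [← (map_injective_of_injective (injective_subtype _)).eq_iff, map_subtype_top, ← span_image,
    ← range_comp]
  rfl

lemma span_range_selfAdjointOuter : span ℝ (range (selfAdjointOuter (d := d))) = ⊤ :=
  (span_range_outer_eq_iff id).mp span_range_outer

lemma selfAdjointOuter_add_smul (x v : EuclideanSpace ℂ (Fin d)) (t : ℝ) :
    selfAdjointOuter (x + t • v) = selfAdjointOuter x +
      t • (selfAdjointOuter (x + v) - selfAdjointOuter x - selfAdjointOuter v) +
      t ^ 2 • selfAdjointOuter v :=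
  Subtype.ext (outer_add_smul x v t)

lemma exists_polynomial_det_selfAdjointOuter_add_smul {ι : Type*} [Fintype ι] [DecidableEq ι]
    (b : Basis ι ℝ (selfAdjoint.submodule ℝ (Matrix (Fin d) (Fin d) ℂ)))
    (φ v : ι → EuclideanSpace ℂ (Fin d)) :
    ∃ p : ℝ[X], ∀ t : ℝ, b.det (selfAdjointOuter ∘ (φ + t • v)) = p.eval t := by
  refine b.exists_polynomial_det_eq _ fun i j => ⟨C (b.repr (selfAdjointOuter (φ j)) i) +
    C (b.repr (selfAdjointOuter (φ j + v j) - selfAdjointOuter (φ j) - selfAdjointOuter (v j)) i) *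
      X + C (b.repr (selfAdjointOuter (v j)) i) * X ^ 2, fun t => ?_⟩
  simp only [Function.comp_apply, Pi.add_apply, Pi.smul_apply, selfAdjointOuter_add_smul, map_add,
    map_smul, map_sub, Finsupp.coe_add, Finsupp.coe_smul, Finsupp.coe_sub, Pi.sub_apply, smul_eq_mul,
    eval_add, eval_C, eval_mul, eval_sub, eval_X, eval_pow]
  ring

end Outer

/-- The set of `d²`-tuples of vectors in `ℂ^d` whose outer products span the real
vector space of `d × d` Hermitian matrices is open and dense. -/
theorem stmt1 (d : ℕ) :
    IsOpen {φ : Fin (d ^ 2) → EuclideanSpace ℂ (Fin d) |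
        Submodule.span ℝ (Set.range fun i => outer (φ i)) =
          selfAdjoint.submodule ℝ (Matrix (Fin d) (Fin d) ℂ)} ∧
    Dense {φ : Fin (d ^ 2) → EuclideanSpace ℂ (Fin d) |
        Submodule.span ℝ (Set.range fun i => outer (φ i)) =
          selfAdjoint.submodule ℝ (Matrix (Fin d) (Fin d) ℂ)} := by
  have hdim : finrank ℝ (selfAdjoint.submodule ℝ (Matrix (Fin d) (Fin d) ℂ)) = d ^ 2 := by
    simpa using finrank_selfAdjoint_matrix (Fin d)
  let b := finBasisOfFinrankEq ℝ _ hdim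
  let D : (Fin (d ^ 2) → EuclideanSpace ℂ (Fin d)) → ℝ := fun φ => b.det (selfAdjointOuter ∘ φ)
  have hS : {φ : Fin (d ^ 2) → EuclideanSpace ℂ (Fin d) |
      span ℝ (range fun i => outer (φ i)) = selfAdjoint.submodule ℝ (Matrix (Fin d) (Fin d) ℂ)} =
      {φ | D φ ≠ 0} := by
    ext φ
    exact (span_range_outer_eq_iff φ).trans (b.span_range_eq_top_iff_det_ne_zero _)
  have hD : Continuous D :=
    b.continuous_det.comp (continuous_pi fun i =>
      continuous_selfAdjointOuter.comp (continuous_apply i))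
  obtain ⟨ψ, hψ⟩ : ∃ ψ : Fin (d ^ 2) → EuclideanSpace ℂ (Fin d),
      span ℝ (range (selfAdjointOuter ∘ ψ)) = ⊤ :=
    hdim ▸ exists_fin_finrank_span_range_eq_top span_range_selfAdjointOuter
  exact hS ▸ ⟨isOpen_ne_fun hD continuous_const,
    dense_setOf_ne_zero_of_polynomial_on_lines
      (exists_polynomial_det_selfAdjointOuter_add_smul b)
      ((b.span_range_eq_top_iff_det_ne_zero _).mp hψ)⟩
end

section
/- Let φ_1, ..., φ_n be unit norm vectors in ℂ^d with d ≥ 1. Then {φ_i}_{i=1}^n is scalable if and only if (1/d)·I_d lies in the convex hull of the set {φ_iφ_i* : i = 1, ..., n}, where the convex hull is taken in the real vector space of d×d Hermitian matrices. -/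
open Finset Set

section ConvexCone

variable {R E ι : Type*} [Field R] [LinearOrder R] [IsStrictOrderedRing R] [AddCommGroup E]
  [Module R E] [Fintype ι]

theorem mem_convexHull_range_iff_exists_sum {v : ι → E} {x : E} :
    x ∈ convexHull R (range v) ↔
      ∃ w : ι → R, (∀ i, 0 ≤ w i) ∧ ∑ i, w i = 1 ∧ ∑ i, w i • v i = x := by
  classical
  refine ⟨fun hx => ?_, fun ⟨w, hw₀, hw₁, hx⟩ =>
    mem_convexHull_of_exists_fintype w v hw₀ hw₁ (mem_range_self ·) hx⟩
  rw [convexHull_range_eq_exists_affineCombination] at hx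
  obtain ⟨s, w, hw₀, hw₁, rfl⟩ := hx
  have hw₁' : ∑ i, (s : Set ι).indicator w i = 1 := by
    rwa [sum_indicator_subset _ s.subset_univ]
  refine ⟨(s : Set ι).indicator w, fun i => ?_, hw₁', ?_⟩
  · by_cases hi : i ∈ s <;> simp [hi, hw₀]
  · rw [affineCombination_indicator_subset _ _ s.subset_univ,
      affineCombination_eq_linear_combination _ _ _ hw₁']

theorem exists_nonneg_sum_smul_eq_iff_inv_smul_mem_convexHull (f : E →ₗ[R] R) {v : ι → E}
    (hv : ∀ i, f (v i) = 1) {x : E} (hx : 0 < f x) :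
    (∃ w : ι → R, (∀ i, 0 ≤ w i) ∧ ∑ i, w i • v i = x) ↔
      (f x)⁻¹ • x ∈ convexHull R (range v) := by
  rw [mem_convexHull_range_iff_exists_sum]
  constructor
  · rintro ⟨w, hw₀, hx'⟩
    have hsum : ∑ i, w i = f x := by simp [← hx', hv]
    refine ⟨fun i => (f x)⁻¹ * w i, fun i => mul_nonneg (inv_nonneg.2 hx.le) (hw₀ i), ?_, ?_⟩
    · rw [← mul_sum, hsum, inv_mul_cancel₀ hx.ne']
    · simp_rw [mul_smul, ← smul_sum, hx']
  · rintro ⟨w, hw₀, -, hx'⟩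
    refine ⟨fun i => f x * w i, fun i => mul_nonneg hx.le (hw₀ i), ?_⟩
    simp_rw [mul_smul, ← smul_sum, hx', smul_inv_smul₀ hx.ne']

end ConvexCone

theorem trace_outer {d : ℕ} (x : EuclideanSpace ℂ (Fin d)) :
    (outer x).trace = (‖x‖ : ℂ) ^ 2 := by
  rw [← Complex.ofReal_pow, EuclideanSpace.norm_sq_eq]
  simp [Matrix.trace, outer, Complex.mul_conj, Complex.normSq_eq_norm_sq]

/-- A unit norm family `{φ_i}_{i=1}^n ⊆ ℂ^d` is scalable (there exist nonnegative reals
`w_i` with `Σ w_i φ_i φ_i* = I_d`) iff `(1/d) I_d` lies in the convex hull of the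
outer products `{φ_i φ_i*}`. -/
theorem stmt5 {d n : ℕ} (hd : 1 ≤ d) (φ : Fin n → EuclideanSpace ℂ (Fin d))
    (hφ : ∀ i, ‖φ i‖ = 1) :
    (∃ w : Fin n → ℝ, (∀ i, 0 ≤ w i) ∧
        ∑ i, w i • outer (φ i) = (1 : Matrix (Fin d) (Fin d) ℂ)) ↔
      (d : ℝ)⁻¹ • (1 : Matrix (Fin d) (Fin d) ℂ) ∈
        convexHull ℝ (Set.range fun i => outer (φ i)) := by
  let reTrace := Complex.reLm ∘ₗ Matrix.traceLinearMap (Fin d) ℝ ℂ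
  have h_outer (i : Fin n) : reTrace (outer (φ i)) = 1 := by
    simp [reTrace, trace_outer, hφ]
  have h_one : reTrace 1 = d := by simp [reTrace]
  rw [← h_one]
  exact exists_nonneg_sum_smul_eq_iff_inv_smul_mem_convexHull reTrace h_outer
    (h_one ▸ Nat.cast_pos.2 hd)
end

section
/- Let φ_1, ..., φ_n be unit norm vectors in ℂ^d which form a scalable family. Then there exists a subset I ⊆ {1, ..., n} such that {φ_i}_{i∈I} is scalable and the outer products {φ_iφ_i*}_{i∈I} are linearly independent over ℝ in the space of d×d Hermitian matrices. -/
open Finset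

section ConicCaratheodory

variable {ι K M : Type*} [AddCommGroup M] {v : ι → M} {s : Finset ι}

lemma exists_sum_smul_eq_zero_of_not_linearIndepOn [Ring K] [LinearOrder K] [IsOrderedRing K]
    [Module K M] (hv : ¬LinearIndepOn K v s) :
    ∃ c : ι → K, ∑ i ∈ s, c i • v i = 0 ∧ ∃ j ∈ s, 0 < c j := by
  obtain ⟨c, hc, j, hjs, hcj⟩ := not_linearIndepOn_finset_iff.mp hv
  rcases hcj.lt_or_gt with hneg | hpos
  · exact ⟨-c, by simp [neg_smul, sum_neg_distrib, hc], j, hjs, neg_pos.mpr hneg⟩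
  · exact ⟨c, hc, j, hjs, hpos⟩

variable [Field K] [LinearOrder K] [IsStrictOrderedRing K] [Module K M]

lemma exists_nonneg_sum_smul_eq_of_sum_smul_eq_zero {w c : ι → K} (hw : ∀ i ∈ s, 0 ≤ w i)
    (hc : ∑ i ∈ s, c i • v i = 0) (hpos : ∃ j ∈ s, 0 < c j) :
    ∃ i ∈ s, ∃ w' : ι → K, (∀ j ∈ s, 0 ≤ w' j) ∧ w' i = 0 ∧
      ∑ j ∈ s, w' j • v j = ∑ j ∈ s, w j • v j := by
  obtain ⟨j, hjs, hcj⟩ := hpos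
  obtain ⟨i, hi, hmin⟩ := (s.filter (0 < c ·)).exists_min_image (fun i => w i / c i)
    ⟨j, mem_filter.mpr ⟨hjs, hcj⟩⟩
  obtain ⟨his, hci⟩ := mem_filter.mp hi
  set τ := w i / c i
  have hτ : 0 ≤ τ := div_nonneg (hw i his) hci.le
  refine ⟨i, his, fun j => w j - τ * c j, fun j hj => ?_, ?_, ?_⟩
  · rcases lt_or_ge 0 (c j) with hcj | hcj
    · have := (le_div_iff₀ hcj).mp (hmin j (mem_filter.mpr ⟨hj, hcj⟩))
      linarith
    · nlinarith [hw j hj]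
  · simp [τ, div_mul_cancel₀ _ hci.ne']
  · simp only [sub_smul, mul_smul, sum_sub_distrib, ← smul_sum, hc, smul_zero, sub_zero]

theorem exists_linearIndepOn_nonneg_sum_smul_eq (w : ι → K) (hw : ∀ i ∈ s, 0 ≤ w i) :
    ∃ t ⊆ s, ∃ w' : ι → K, (∀ i ∈ t, 0 ≤ w' i) ∧
      ∑ i ∈ t, w' i • v i = ∑ i ∈ s, w i • v i ∧ LinearIndepOn K v t := by
  classical
  induction s using Finset.strongInduction generalizing w with
  | H s ih =>
    by_cases hv : LinearIndepOn K v s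
    · exact ⟨s, subset_rfl, w, hw, rfl, hv⟩
    obtain ⟨c, hc, hpos⟩ := exists_sum_smul_eq_zero_of_not_linearIndepOn hv
    obtain ⟨i, his, w', hw', hw'i, hsum⟩ :=
      exists_nonneg_sum_smul_eq_of_sum_smul_eq_zero hw hc hpos
    obtain ⟨t, hts, w'', hw'', hsum', hli⟩ :=
      ih (s.erase i) (erase_ssubset his) w' fun j hj => hw' j (mem_of_mem_erase hj)
    refine ⟨t, hts.trans (erase_subset i s), w'', hw'', ?_, hli⟩
    rw [hsum', ← hsum, ← sum_erase_add s _ his, hw'i, zero_smul, add_zero]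

end ConicCaratheodory

theorem stmt8_general {d n : ℕ} (φ : Fin n → EuclideanSpace ℂ (Fin d))
    (hscal : ∃ w : Fin n → ℝ, (∀ i, 0 ≤ w i) ∧
        ∑ i, w i • outer (φ i) = (1 : Matrix (Fin d) (Fin d) ℂ)) :
    ∃ I : Finset (Fin n),
      (∃ w : Fin n → ℝ, (∀ i, 0 ≤ w i) ∧
          ∑ i ∈ I, w i • outer (φ i) = (1 : Matrix (Fin d) (Fin d) ℂ)) ∧
        LinearIndependent ℝ (fun i : I => outer (φ i)) := by
  obtain ⟨w, hw, hsum⟩ := hscal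
  obtain ⟨I, -, w', hw', hsum', hli⟩ :=
    exists_linearIndepOn_nonneg_sum_smul_eq (v := fun i => outer (φ i)) w fun i _ => hw i
  refine ⟨I, ⟨fun i => max (w' i) 0, fun i => le_max_right _ _, ?_⟩, hli⟩
  rw [← hsum, ← hsum']
  exact sum_congr rfl fun i hi => by simp only [max_eq_left (hw' i hi)]

/-- If a unit norm family `{φ_i}_{i=1}^n ⊆ ℂ^d` is scalable, then there is a subset
`I ⊆ {1, ..., n}` such that `{φ_i}_{i∈I}` is scalable and the outer products
`{φ_i φ_i*}_{i∈I}` are linearly independent over `ℝ`. -/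
theorem stmt8 {d n : ℕ} (φ : Fin n → EuclideanSpace ℂ (Fin d))
    (hφ : ∀ i, ‖φ i‖ = 1)
    (hscal : ∃ w : Fin n → ℝ, (∀ i, 0 ≤ w i) ∧
        ∑ i, w i • outer (φ i) = (1 : Matrix (Fin d) (Fin d) ℂ)) :
    ∃ I : Finset (Fin n),
      (∃ w : Fin n → ℝ, (∀ i, 0 ≤ w i) ∧
          ∑ i ∈ I, w i • outer (φ i) = (1 : Matrix (Fin d) (Fin d) ℂ)) ∧
        LinearIndependent ℝ (fun i : I => outer (φ i)) :=
  stmt8_general φ hscal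
end

section
/- Let φ_1, ..., φ_n be unit norm vectors in ℂ^d and let w = (w_1, ..., w_n) be a minimal scaling of {φ_i}_{i=1}^n. Then the outer products {φ_iφ_i* : w_i > 0} are linearly independent over ℝ in the space of d×d Hermitian matrices. -/
/-!
A conic Carathéodory argument, which uses nothing about outer products: if `∑ c i • x i = 0` for
some nonzero `c` supported where `w > 0`, then, after replacing `c` by `-c` if necessary, some
`c i` is positive, and `w - t • c` with `t = min {w i / c i | c i > 0}` is again a nonnegative
combination with the same value whose support misses the minimizing index, contradicting
minimality.
-/

open Finset

section ConicCaratheodory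

variable {ι 𝕜 M : Type*} [Fintype ι] [Field 𝕜] [LinearOrder 𝕜] [IsStrictOrderedRing 𝕜]
  [AddCommGroup M] [Module 𝕜 M]

theorem exists_sub_mul_nonneg_and_eq_zero {w c : ι → 𝕜} (hw : ∀ i, 0 ≤ w i) {i : ι}
    (hi : 0 < c i) :
    ∃ t : 𝕜, (∀ k, 0 ≤ w k - t * c k) ∧ ∃ j, 0 < c j ∧ w j - t * c j = 0 := by
  obtain ⟨j, hjT, hj_min⟩ :=
    (univ.filter (0 < c ·)).exists_min_image (fun k => w k / c k) ⟨i, by simpa using hi⟩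
  have hcj : 0 < c j := by simpa using hjT
  refine ⟨w j / c j, fun k => ?_, j, hcj, by rw [div_mul_cancel₀ _ hcj.ne', sub_self]⟩
  rcases lt_or_ge 0 (c k) with hck | hck
  · rw [sub_nonneg, ← le_div_iff₀ hck]
    exact hj_min k (by simpa using hck)
  · have : w j / c j * c k ≤ 0 := mul_nonpos_of_nonneg_of_nonpos (div_nonneg (hw j) hcj.le) hck
    linarith [hw k]

theorem exists_ssubset_nonneg_combination_of_sum_smul_eq_zero {x : ι → M} {w c : ι → 𝕜}
    (hw : ∀ i, 0 ≤ w i) (hc : ∑ i, c i • x i = 0) (hcw : ∀ i, w i = 0 → c i = 0) {i : ι}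
    (hi : 0 < c i) :
    ∃ I : Finset ι, (I : Set ι) ⊂ {k | 0 < w k} ∧
      ∃ v : ι → 𝕜, (∀ k, 0 ≤ v k) ∧ ∑ k ∈ I, v k • x k = ∑ k, w k • x k := by
  obtain ⟨t, hv_nonneg, j, hcj, hvj⟩ := exists_sub_mul_nonneg_and_eq_zero (c := c) hw hi
  set v : ι → 𝕜 := fun k => w k - t * c k
  have hv_pos : ∀ k, 0 < v k → 0 < w k := fun k hk =>
    (hw k).lt_of_ne fun hwk => hk.ne' (by simp [v, ← hwk, hcw k hwk.symm])
  have hwj : 0 < w j := (hw j).lt_of_ne fun hwj => hcj.ne' (hcw j hwj.symm)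
  refine ⟨univ.filter (0 < v ·), ?_, v, hv_nonneg, ?_⟩
  · simp only [coe_filter, mem_univ, true_and]
    exact (Set.ssubset_iff_of_subset fun k => hv_pos k).mpr ⟨j, hwj, fun h : 0 < v j => h.ne' hvj⟩
  · calc ∑ k ∈ univ.filter (0 < v ·), v k • x k
        = ∑ k, v k • x k := sum_filter_of_ne fun k _ hk =>
          (hv_nonneg k).lt_of_ne fun h => hk (by rw [show v k = 0 from h.symm, zero_smul])
      _ = ∑ k, w k • x k - t • ∑ k, c k • x k := by
          simp only [v, sub_smul, mul_smul, sum_sub_distrib, smul_sum]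
      _ = ∑ k, w k • x k := by rw [hc, smul_zero, sub_zero]

theorem linearIndepOn_of_minimal_nonneg_combination {x : ι → M} {b : M} {w : ι → 𝕜}
    (hw : ∀ i, 0 ≤ w i) (hsum : ∑ i, w i • x i = b)
    (hmin : ∀ I : Finset ι, (I : Set ι) ⊂ {i | 0 < w i} →
        ¬ ∃ v : ι → 𝕜, (∀ i, 0 ≤ v i) ∧ ∑ i ∈ I, v i • x i = b) :
    LinearIndepOn 𝕜 x {i | 0 < w i} := by
  rw [linearIndepOn_iff]
  intro l hl hl_zero
  by_contra hne
  obtain ⟨i, hi⟩ := DFunLike.ne_iff.mp hne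
  have hc : ∑ k, l k • x k = 0 := by
    simpa [Finsupp.linearCombination_apply, Finsupp.sum_fintype] using hl_zero
  have hcw : ∀ k, w k = 0 → l k = 0 := fun k hwk =>
    (Finsupp.mem_supported' 𝕜 l).mp hl k (by simp [hwk])
  have key (c : ι → 𝕜) (hc₀ : ∑ k, c k • x k = 0) (hcw₀ : ∀ k, w k = 0 → c k = 0) :
      ¬ 0 < c i := fun hpos => by
    obtain ⟨I, hI, v, hv, hvI⟩ :=
      exists_ssubset_nonneg_combination_of_sum_smul_eq_zero hw hc₀ hcw₀ hpos
    exact hmin I hI ⟨v, hv, hvI.trans hsum⟩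
  rcases hi.lt_or_gt with hneg | hpos
  · refine key (-l) ?_ (fun k hwk => by simp [hcw k hwk]) (by simpa using hneg)
    simp [neg_smul, sum_neg_distrib, hc]
  · exact key l hc hcw hpos

end ConicCaratheodory

theorem stmt9_general {d n : ℕ} (φ : Fin n → EuclideanSpace ℂ (Fin d))
    (w : Fin n → ℝ) (hw : ∀ i, 0 ≤ w i)
    (hsum : ∑ i, w i • outer (φ i) = (1 : Matrix (Fin d) (Fin d) ℂ))
    (hmin : ∀ I : Finset (Fin n), (I : Set (Fin n)) ⊂ {i | 0 < w i} →
        ¬ ∃ v : Fin n → ℝ, (∀ i, 0 ≤ v i) ∧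
            ∑ i ∈ I, v i • outer (φ i) = (1 : Matrix (Fin d) (Fin d) ℂ)) :
    LinearIndependent ℝ (fun i : {i : Fin n // 0 < w i} => outer (φ i)) :=
  linearIndepOn_of_minimal_nonneg_combination (x := fun i => outer (φ i)) hw hsum hmin

/-- If `w` is a minimal scaling of a unit norm family `{φ_i}_{i=1}^n ⊆ ℂ^d`
(i.e. `w_i ≥ 0`, `Σ w_i φ_i φ_i* = I_d`, and no proper subset of `{φ_i : w_i > 0}` is
scalable), then the outer products `{φ_i φ_i* : w_i > 0}` are linearly independent
over `ℝ`. -/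
theorem stmt9 {d n : ℕ} (φ : Fin n → EuclideanSpace ℂ (Fin d))
    (hφ : ∀ i, ‖φ i‖ = 1) (w : Fin n → ℝ) (hw : ∀ i, 0 ≤ w i)
    (hsum : ∑ i, w i • outer (φ i) = (1 : Matrix (Fin d) (Fin d) ℂ))
    (hmin : ∀ I : Finset (Fin n), (I : Set (Fin n)) ⊂ {i | 0 < w i} →
        ¬ ∃ v : Fin n → ℝ, (∀ i, 0 ≤ v i) ∧
            ∑ i ∈ I, v i • outer (φ i) = (1 : Matrix (Fin d) (Fin d) ℂ)) :
    LinearIndependent ℝ (fun i : {i : Fin n // 0 < w i} => outer (φ i)) :=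
  stmt9_general φ w hw hsum hmin
end

section
/- Let φ_1, ..., φ_n be unit norm vectors in ℂ^d with d ≥ 1, and let P = {w ∈ ℝ^n : w_i ≥ 0 for all i, and Σ_{i=1}^n w_i φ_iφ_i* = (1/d)·I_d}. If w ∈ P is such that no proper subset of {φ_i : w_i > 0} is scalable, then w is an extreme point (vertex) of P. -/
/-!
If `w` lies in the open segment between distinct `x₁, x₂ ∈ P`, then `u = x₁ - x₂` is nonzero,
satisfies `∑ uᵢ φᵢφᵢ* = 0` and is supported inside the support of `w`; up to swapping `x₁` and
`x₂` it has a negative coordinate. Moving from `w` along `u` until the first coordinate hits zero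
stays in `P` and strictly shrinks the support, and multiplying the new weights by `d` scales a
proper subfamily of `{φᵢ : wᵢ > 0}`.
-/

section NonnegSolutions

variable {ι : Type*}

lemma pos_of_mem_openSegment_of_ne {x₁ x₂ w : ι → ℝ} (h₁ : ∀ i, 0 ≤ x₁ i) (h₂ : ∀ i, 0 ≤ x₂ i)
    (hw : w ∈ openSegment ℝ x₁ x₂) {i : ι} (hi : x₁ i ≠ x₂ i) : 0 < w i := by
  obtain ⟨a, b, ha, hb, -, rfl⟩ := hw
  have h₁' := mul_nonneg ha.le (h₁ i)
  have h₂' := mul_nonneg hb.le (h₂ i)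
  show 0 < a * x₁ i + b * x₂ i
  refine (add_nonneg h₁' h₂').lt_of_ne fun h => hi ?_
  obtain ⟨e₁, e₂⟩ := (add_eq_zero_iff_of_nonneg h₁' h₂').1 h.symm
  rw [(mul_eq_zero_iff_left ha.ne').1 e₁, (mul_eq_zero_iff_left hb.ne').1 e₂]

variable [Fintype ι]

lemma exists_nonneg_add_mul_ssubset {w u : ι → ℝ} (hw : ∀ i, 0 ≤ w i) (hneg : ∃ i, u i < 0)
    (hsupp : ∀ i, u i ≠ 0 → 0 < w i) :
    ∃ t : ℝ, (∀ i, 0 ≤ w i + t * u i) ∧ {i | 0 < w i + t * u i} ⊂ {i | 0 < w i} := by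
  classical
  obtain ⟨i₀, hi₀, hle⟩ := (Finset.univ.filter fun i => u i < 0).exists_min_image
    (fun i => w i / -u i) (by simpa [Finset.Nonempty] using hneg)
  simp only [Finset.mem_filter, Finset.mem_univ, true_and] at hi₀ hle
  have ht : 0 ≤ w i₀ / -u i₀ := div_nonneg (hw i₀) (neg_pos.2 hi₀).le
  refine ⟨w i₀ / -u i₀, fun i => ?_, ⟨fun i hi => ?_, fun h => ?_⟩⟩
  · rcases lt_or_ge (u i) 0 with hu | hu
    · have := (le_div_iff₀ (neg_pos.2 hu)).1 (hle i hu)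
      linarith
    · nlinarith [hw i]
  · by_contra hwi
    have hui : u i = 0 := by_contra fun hui => hwi (hsupp i hui)
    exact hwi (by simpa [hui] using hi)
  · have : 0 < w i₀ + w i₀ / -u i₀ * u i₀ := h (hsupp i₀ hi₀.ne)
    rw [div_mul_eq_mul_div, div_neg, mul_div_assoc, div_self hi₀.ne] at this
    simp at this

variable {M : Type*} [AddCommGroup M] [Module ℝ M]

def nonnegSolutions (A : ι → M) (B : M) : Set (ι → ℝ) :=
  {v | (∀ i, 0 ≤ v i) ∧ ∑ i, v i • A i = B}

lemma mem_extremePoints_nonnegSolutions {A : ι → M} {B : M} {w : ι → ℝ}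
    (hw : w ∈ nonnegSolutions A B)
    (hmin : ∀ v ∈ nonnegSolutions A B, ¬ {i | 0 < v i} ⊂ {i | 0 < w i}) :
    w ∈ Set.extremePoints ℝ (nonnegSolutions A B) := by
  refine ⟨hw, fun x₁ hx₁ x₂ hx₂ hseg => ?_⟩
  suffices x₁ = x₂ by
    subst this
    rw [openSegment_same] at hseg
    exact hseg.symm
  by_contra hne
  wlog hneg : ∃ i, x₁ i < x₂ i generalizing x₁ x₂
  · refine this x₂ hx₂ x₁ hx₁ (openSegment_symm ℝ x₁ x₂ ▸ hseg) (Ne.symm hne) ?_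
    obtain ⟨i, hi⟩ := Function.ne_iff.1 hne
    exact ⟨i, (not_lt.1 fun h => hneg ⟨i, h⟩).lt_of_ne' hi⟩
  obtain ⟨t, hnonneg, hssubset⟩ := exists_nonneg_add_mul_ssubset (u := x₁ - x₂) hw.1
    (by simpa [sub_neg] using hneg)
    fun i hi => pos_of_mem_openSegment_of_ne hx₁.1 hx₂.1 hseg (sub_ne_zero.1 hi)
  refine hmin (fun i => w i + t * (x₁ - x₂) i) ⟨hnonneg, ?_⟩ hssubset
  simp only [Pi.sub_apply, add_smul, mul_smul, sub_smul, Finset.sum_add_distrib,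
    ← Finset.smul_sum, Finset.sum_sub_distrib, hw.2, hx₁.2, hx₂.2, sub_self, smul_zero, add_zero]

end NonnegSolutions

theorem stmt11_general {d n : ℕ} (hd : 1 ≤ d) (φ : Fin n → EuclideanSpace ℂ (Fin d))
    (w : Fin n → ℝ) (hw : ∀ i, 0 ≤ w i)
    (hsum : ∑ i, w i • outer (φ i) = (d : ℝ)⁻¹ • (1 : Matrix (Fin d) (Fin d) ℂ))
    (hmin : ∀ I : Finset (Fin n), (I : Set (Fin n)) ⊂ {i | 0 < w i} →
        ¬ ∃ v : Fin n → ℝ, (∀ i, 0 ≤ v i) ∧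
            ∑ i ∈ I, v i • outer (φ i) = (1 : Matrix (Fin d) (Fin d) ℂ)) :
    w ∈ Set.extremePoints ℝ
        {v : Fin n → ℝ | (∀ i, 0 ≤ v i) ∧
          ∑ i, v i • outer (φ i) = (d : ℝ)⁻¹ • (1 : Matrix (Fin d) (Fin d) ℂ)} := by
  refine mem_extremePoints_nonnegSolutions (A := fun i => outer (φ i)) ⟨hw, hsum⟩ ?_
  rintro v ⟨hv, hvsum⟩ hssubset
  refine hmin {i | 0 < v i} (by simpa using hssubset)
    ⟨fun i => d * v i, fun i => mul_nonneg d.cast_nonneg (hv i), ?_⟩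
  have hd' : (d : ℝ) ≠ 0 := by positivity
  calc ∑ i with 0 < v i, (d * v i) • outer (φ i)
      = ∑ i, (d * v i) • outer (φ i) :=
        Finset.sum_filter_of_ne fun i _ h => (hv i).lt_of_ne' fun h0 => h (by simp [h0])
    _ = (d : ℝ) • ∑ i, v i • outer (φ i) := by simp only [mul_smul, Finset.smul_sum]
    _ = 1 := by rw [hvsum, smul_smul, mul_inv_cancel₀ hd', one_smul]

/-- Let `P = {w ∈ ℝ^n : w ≥ 0, Σ w_i φ_i φ_i* = (1/d) I_d}` for unit norm vectors
`φ_i ∈ ℂ^d`. If `w ∈ P` and no proper subset of `{φ_i : w_i > 0}` is scalable, then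
`w` is an extreme point of `P`. -/
theorem stmt11 {d n : ℕ} (hd : 1 ≤ d) (φ : Fin n → EuclideanSpace ℂ (Fin d))
    (hφ : ∀ i, ‖φ i‖ = 1) (w : Fin n → ℝ) (hw : ∀ i, 0 ≤ w i)
    (hsum : ∑ i, w i • outer (φ i) = (d : ℝ)⁻¹ • (1 : Matrix (Fin d) (Fin d) ℂ))
    (hmin : ∀ I : Finset (Fin n), (I : Set (Fin n)) ⊂ {i | 0 < w i} →
        ¬ ∃ v : Fin n → ℝ, (∀ i, 0 ≤ v i) ∧
            ∑ i ∈ I, v i • outer (φ i) = (1 : Matrix (Fin d) (Fin d) ℂ)) :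
    w ∈ Set.extremePoints ℝ
        {v : Fin n → ℝ | (∀ i, 0 ≤ v i) ∧
          ∑ i, v i • outer (φ i) = (d : ℝ)⁻¹ • (1 : Matrix (Fin d) (Fin d) ℂ)} :=
  stmt11_general hd φ w hw hsum hmin
end

section
/- Let φ_1, ..., φ_n be vectors in ℂ^d with n ≤ 2d − 1. If {φ_i}_{i=1}^n is full spark, i.e., every subfamily of size at most d is linearly independent over ℂ, then the outer products {φ_iφ_i*}_{i=1}^n are linearly independent over ℝ in the space of d×d Hermitian matrices. -/
open Finset Submodule Matrix

section
variable {𝕜 E ι : Type*} [RCLike 𝕜] [NormedAddCommGroup E] [InnerProductSpace 𝕜 E] [Fintype ι]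

theorem span_pos_le_span_neg_of_sum_mul_norm_inner_sq_eq_zero (φ : ι → E) (c : ι → ℝ)
    (h : ∀ v, ∑ i, c i * ‖inner 𝕜 v (φ i)‖ ^ 2 = 0) :
    span 𝕜 (φ '' {i | 0 < c i}) ≤ span 𝕜 (φ '' {i | c i < 0}) := by
  set S := span 𝕜 (φ '' {i | c i < 0})
  have : FiniteDimensional 𝕜 S := FiniteDimensional.span_of_finite 𝕜 (Set.toFinite _)
  rw [← S.orthogonal_orthogonal, span_le]
  rintro _ ⟨i, hi, rfl⟩
  rw [SetLike.mem_coe, mem_orthogonal']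
  intro v hv
  have hneg : ∀ k, c k < 0 → inner 𝕜 v (φ k) = 0 := fun k hk =>
    inner_left_of_mem_orthogonal (subset_span (Set.mem_image_of_mem φ hk)) hv
  have hsum : ∑ k ∈ {k | 0 < c k}, c k * ‖inner 𝕜 v (φ k)‖ ^ 2 = 0 := by
    rw [Finset.sum_filter_of_ne, h v]
    intro k _ hk
    rcases lt_trichotomy (c k) 0 with hk' | hk' | hk'
    · simp [hneg k hk'] at hk
    · simp [hk'] at hk
    · exact hk'
  have hnonneg : ∀ k ∈ ({k | 0 < c k} : Finset ι), 0 ≤ c k * ‖inner 𝕜 v (φ k)‖ ^ 2 :=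
    fun k hk => by
      have : 0 < c k := by simpa using hk
      positivity
  have hi' := (sum_eq_zero_iff_of_nonneg hnonneg).1 hsum i (by simpa using hi)
  refine inner_eq_zero_symm.1 ?_
  simpa [(show 0 < c i from hi).ne'] using hi'

theorem span_pos_eq_span_neg_of_sum_mul_norm_inner_sq_eq_zero (φ : ι → E) (c : ι → ℝ)
    (h : ∀ v, ∑ i, c i * ‖inner 𝕜 v (φ i)‖ ^ 2 = 0) :
    span 𝕜 (φ '' {i | 0 < c i}) = span 𝕜 (φ '' {i | c i < 0}) := by
  refine le_antisymm (span_pos_le_span_neg_of_sum_mul_norm_inner_sq_eq_zero φ c h) ?_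
  have h' : ∀ v, ∑ i, (-c) i * ‖inner 𝕜 v (φ i)‖ ^ 2 = 0 := fun v => by
    simp [neg_mul, Finset.sum_neg_distrib, h v]
  simpa using span_pos_le_span_neg_of_sum_mul_norm_inner_sq_eq_zero φ (-c) h'
end

theorem eq_empty_of_disjoint_of_span_eq {K V ι : Type*} [DivisionRing K] [AddCommGroup V]
    [Module K V] {φ : ι → V} {d : ℕ} (hφ : ∀ I : Finset ι, #I ≤ d → LinearIndepOn K φ I)
    {A B : Finset ι} (hAB : Disjoint A B) (hcard : #A + #B < 2 * d)
    (hspan : span K (φ '' A) = span K (φ '' B)) : A = ∅ ∧ B = ∅ := by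
  classical
  wlog hle : #A ≤ #B generalizing A B
  · exact (this hAB.symm (by omega) hspan.symm (by omega)).symm
  obtain rfl : B = ∅ := by
    by_contra hB
    obtain ⟨j, hj⟩ := nonempty_iff_ne_empty.2 hB
    have hjA : j ∉ (A : Set ι) := disjoint_right.1 hAB hj
    have hindep := hφ (insert j A) (by grind [card_insert_le])
    rw [coe_insert, linearIndepOn_insert hjA] at hindep
    exact hindep.2 (hspan ▸ subset_span ⟨j, hj, rfl⟩)
  simp_all

theorem star_dotProduct_outer_mulVec {d : ℕ} (x v : EuclideanSpace ℂ (Fin d)) :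
    star (WithLp.ofLp v) ⬝ᵥ (outer x *ᵥ WithLp.ofLp v) = (‖inner ℂ v x‖ ^ 2 : ℝ) := by
  have houter : outer x = vecMulVec (WithLp.ofLp x) (star (WithLp.ofLp x)) := rfl
  rw [houter, vecMulVec_mulVec, EuclideanSpace.inner_eq_star_dotProduct]
  simp only [dotProduct_comm (star _), op_smul_eq_smul, smul_dotProduct, smul_eq_mul,
    Complex.ofReal_pow]
  rw [dotProduct_star (WithLp.ofLp v)]
  exact_mod_cast RCLike.conj_mul _

theorem sum_mul_norm_inner_sq_eq_zero_of_sum_smul_outer_eq_zero {d : ℕ} {ι : Type*} [Fintype ι]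
    (φ : ι → EuclideanSpace ℂ (Fin d)) (c : ι → ℝ) (hc : ∑ i, c i • outer (φ i) = 0)
    (v : EuclideanSpace ℂ (Fin d)) : ∑ i, c i * ‖inner ℂ v (φ i)‖ ^ 2 = 0 := by
  have h := congrArg (fun M => star (WithLp.ofLp v) ⬝ᵥ (M *ᵥ WithLp.ofLp v)) hc
  simp only [sum_mulVec, dotProduct_sum, smul_mulVec, dotProduct_smul,
    star_dotProduct_outer_mulVec, zero_mulVec, dotProduct_zero, Complex.real_smul] at h
  exact_mod_cast h

/-- If `φ_1, ..., φ_n ∈ ℂ^d` with `n ≤ 2d - 1` is full spark (every subfamily of size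
at most `d` is linearly independent over `ℂ`), then the outer products `{φ_i φ_i*}`
are linearly independent over `ℝ`. -/
theorem stmt13 {d n : ℕ} (hn : n + 1 ≤ 2 * d) (φ : Fin n → EuclideanSpace ℂ (Fin d))
    (hfs : ∀ I : Finset (Fin n), I.card ≤ d →
        LinearIndependent ℂ (fun i : I => φ i)) :
    LinearIndependent ℝ (fun i => outer (φ i)) := by
  rw [Fintype.linearIndependent_iff]
  intro c hc i
  set P : Finset (Fin n) := {k | 0 < c k}
  set N : Finset (Fin n) := {k | c k < 0}
  have hspan : span ℂ (φ '' P) = span ℂ (φ '' N) := by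
    simpa [P, N] using span_pos_eq_span_neg_of_sum_mul_norm_inner_sq_eq_zero φ c
      (sum_mul_norm_inner_sq_eq_zero_of_sum_smul_outer_eq_zero φ c hc)
  have hPN : Disjoint P N := disjoint_filter.2 fun k _ hk => hk.asymm
  have hcard : #P + #N < 2 * d := by
    have := card_le_univ (P ∪ N)
    rw [card_union_of_disjoint hPN, Fintype.card_fin] at this
    omega
  obtain ⟨hP, hN⟩ := eq_empty_of_disjoint_of_span_eq hfs hPN hcard hspan
  have hiP : i ∉ P := hP ▸ notMem_empty i
  have hiN : i ∉ N := hN ▸ notMem_empty i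
  simp only [P, N, mem_filter_univ] at hiP hiN
  linarith
end
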